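/- Suppose μ(A) = ∫_A f dν for all measurable A, where f is a positive continuous function on a compact metric space Ω, and suppose ε^{-Q}μ(B(x,ε)) → f(x)·c uniformly on Ω as ε → 0+ for some constant c > 0. If f is uniformly continuous and bounded away from zero on Ω, then ε^{-Q}·ν(B(x,ε)) → c uniformly on Ω as ε → 0+. -/

import Mathlib

/-!
By uniform continuity of `f`, `∫_{B(x,ε)} f dν = (f x + o(1)) · ν(B(x,ε))` uniformly in `x`.
Dividing by `ε^Q` and by `f x ≥ min f > 0` transfers the asymptotics of `μ` to `ν`.
-/

open MeasureTheory Metric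

theorem Continuous.exists_pos_forall_le {X : Type*} [TopologicalSpace X] [CompactSpace X]
    {f : X → ℝ} (hf : Continuous f) (hpos : ∀ x, 0 < f x) : ∃ m > 0, ∀ x, m ≤ f x := by
  rcases isEmpty_or_nonempty X with hX | ⟨⟨x₀⟩⟩
  · exact ⟨1, one_pos, isEmptyElim⟩
  obtain ⟨x, hx⟩ := hf.exists_forall_le' x₀ (by simp [Filter.cocompact_eq_bot])
  exact ⟨f x, hpos x, hx⟩

section Density

variable {X : Type*} [MeasurableSpace X] {ν : Measure X} {f : X → ℝ}

theorem measure_lt_top_of_integrableOn_of_forall_le {s : Set X} {m : ℝ} (hm : 0 < m)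
    (hmf : ∀ x, m ≤ f x) (hfs : IntegrableOn f s ν) : ν s < ⊤ := by
  have h := hfs.measure_norm_ge_lt_top hm
  have huniv : {x | m ≤ ‖f x‖} = Set.univ :=
    Set.eq_univ_of_forall fun x => (hmf x).trans (Real.le_norm_self _)
  rwa [huniv, Measure.restrict_apply_univ] at h

theorem isFiniteMeasure_of_forall_integrableOn_ball [PseudoMetricSpace X] [CompactSpace X]
    {m : ℝ} (hm : 0 < m) (hmf : ∀ x, m ≤ f x)
    (hball : ∀ x, ∃ ε > 0, IntegrableOn f (ball x ε) ν) : IsFiniteMeasure ν := by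
  have : IsLocallyFiniteMeasure ν := ⟨fun x => by
    obtain ⟨ε, hε, hfε⟩ := hball x
    exact ⟨ball x ε, ball_mem_nhds x hε, measure_lt_top_of_integrableOn_of_forall_le hm hmf hfε⟩⟩
  infer_instance

theorem abs_setIntegral_sub_mul_measureReal_le {s : Set X} (hs : ν s < ⊤)
    (hfs : IntegrableOn f s ν) {C η : ℝ} (h : ∀ y ∈ s, |f y - C| ≤ η) :
    |∫ y in s, f y ∂ν - C * ν.real s| ≤ η * ν.real s := by
  have hsub : ∫ y in s, f y ∂ν - C * ν.real s = ∫ y in s, (f y - C) ∂ν := by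
    rw [integral_sub hfs (integrableOn_const hs.ne), setIntegral_const, smul_eq_mul, mul_comm]
  rw [hsub, ← Real.norm_eq_abs]
  exact norm_setIntegral_le_of_norm_le_const hs h

end Density

/-- Multiplying `|V/s - c|` by `y` and splitting at `a/s` gives `(y - η)|V/s - c| < η c + δ`. -/
theorem abs_div_sub_lt_of_approx {a V s y c m η δ : ℝ} (hm : 0 < m) (hmy : m ≤ y)
    (hs : 0 < s) (hV : 0 ≤ V) (hη₀ : 0 ≤ η) (hη : η ≤ m / 2)
    (hnum : |a - y * V| ≤ η * V) (hlim : |a / s - c * y| < δ) :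
    |V / s - c| < 2 * (η * c + δ) / m := by
  set W := V / s
  have hW : 0 ≤ W := div_nonneg hV hs.le
  have hnum' : |a / s - y * W| ≤ η * W := by
    rw [show a / s - y * W = (a - y * V) / s by simp only [W]; field_simp,
      abs_div, abs_of_pos hs]
    simpa only [W, mul_div_assoc] using div_le_div_of_nonneg_right hnum hs.le
  have hsplit : y * |W - c| < η * W + δ := by
    calc y * |W - c| = |(y * W - a / s) + (a / s - c * y)| := by
          rw [← abs_of_pos (hm.trans_le hmy), ← abs_mul, abs_of_pos (hm.trans_le hmy)]
          ring_nf
      _ ≤ |y * W - a / s| + |a / s - c * y| := abs_add_le _ _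
      _ < η * W + δ := by rw [abs_sub_comm] at hnum'; linarith
  have hWc : W ≤ |W - c| + c := by linarith [le_abs_self (W - c)]
  rw [lt_div_iff₀ hm]
  nlinarith [abs_nonneg (W - c), mul_le_mul_of_nonneg_left hWc hη₀]

theorem stmt9_general {X : Type*} [MetricSpace X] [CompactSpace X] [MeasurableSpace X]
    [BorelSpace X] (ν μ : Measure X) (f : X → ℝ) (hf : Continuous f)
    (hfpos : ∀ x, 0 < f x) (Q c : ℝ) (hc : 0 < c)
    (hμ : ∀ A : Set X, MeasurableSet A → μ A = ENNReal.ofReal (∫ x in A, f x ∂ν))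
    (hconv : ∀ δ : ℝ, 0 < δ → ∃ ε₁ : ℝ, 0 < ε₁ ∧ ∀ ε : ℝ, 0 < ε → ε ≤ ε₁ → ∀ x : X,
      |(μ (Metric.ball x ε)).toReal / ε ^ Q - c * f x| < δ) :
    ∀ δ : ℝ, 0 < δ → ∃ ε₁ : ℝ, 0 < ε₁ ∧ ∀ ε : ℝ, 0 < ε → ε ≤ ε₁ → ∀ x : X,
      |(ν (Metric.ball x ε)).toReal / ε ^ Q - c| < δ := by
  obtain ⟨m, hm, hmf⟩ := hf.exists_pos_forall_le hfpos
  have hcfpos : ∀ x, 0 < c * f x := fun x => mul_pos hc (hfpos x)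
  -- Where `f` is not integrable the Bochner integral is `0`, so `μ` of the ball would vanish.
  have : IsFiniteMeasure ν := isFiniteMeasure_of_forall_integrableOn_ball hm hmf fun x => by
    obtain ⟨ε, hε, hcv⟩ := hconv (c * f x) (hcfpos x)
    refine ⟨ε, hε, Integrable.of_integral_ne_zero fun hzero => ?_⟩
    have h := hcv ε hε le_rfl x
    rw [hμ _ measurableSet_ball, hzero] at h
    simp [abs_of_pos (hcfpos x)] at h
  have hint : Integrable f ν := hf.integrable_of_hasCompactSupport (.of_compactSpace f)
  intro δ hδ
  set κ := m * δ / (4 * (c + 1))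
  have hκ : 0 < κ := by positivity
  set η := min (m / 2) κ
  obtain ⟨ε₁, hε₁, hcv⟩ := hconv κ hκ
  obtain ⟨r, hr, hfr⟩ := Metric.uniformContinuous_iff.mp
    (CompactSpace.uniformContinuous_of_continuous hf) η (lt_min (half_pos hm) hκ)
  refine ⟨min ε₁ r, lt_min hε₁ hr, fun ε hε hεr x => ?_⟩
  have hnum : |∫ y in ball x ε, f y ∂ν - f x * ν.real (ball x ε)| ≤ η * ν.real (ball x ε) :=
    abs_setIntegral_sub_mul_measureReal_le (measure_lt_top ν _) hint.integrableOn fun y hy =>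
      (hfr ((mem_ball.mp hy).trans_le (hεr.trans (min_le_right _ _)))).le
  have hlim := hcv ε hε (hεr.trans (min_le_left _ _)) x
  rw [hμ _ measurableSet_ball, ENNReal.toReal_ofReal
    (setIntegral_nonneg measurableSet_ball fun y _ => (hfpos y).le)] at hlim
  calc _ < 2 * (η * c + κ) / m :=
        abs_div_sub_lt_of_approx hm (hmf x) (Real.rpow_pos_of_pos hε Q) ENNReal.toReal_nonneg
          (lt_min (half_pos hm) hκ).le (min_le_left _ _) hnum hlim
    _ ≤ 2 * (κ * c + κ) / m := by gcongr; exact min_le_right _ _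
    _ = δ / 2 := by simp only [κ]; field_simp; ring
    _ < δ := half_lt_self hδ

/-- If `μ` has continuous positive density `f` with respect to `ν` on a compact metric
space and `ε^{-Q}·μ(B(x,ε)) → c·f(x)` uniformly as `ε → 0+`, then
`ε^{-Q}·ν(B(x,ε)) → c` uniformly as `ε → 0+`. -/
theorem stmt9 {X : Type*} [MetricSpace X] [CompactSpace X] [MeasurableSpace X]
    [BorelSpace X] (ν μ : Measure X) (f : X → ℝ) (hf : Continuous f)
    (hfpos : ∀ x, 0 < f x) (Q c : ℝ) (hQ : 0 < Q) (hc : 0 < c)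
    (hμ : ∀ A : Set X, MeasurableSet A → μ A = ENNReal.ofReal (∫ x in A, f x ∂ν))
    (hconv : ∀ δ : ℝ, 0 < δ → ∃ ε₁ : ℝ, 0 < ε₁ ∧ ∀ ε : ℝ, 0 < ε → ε ≤ ε₁ → ∀ x : X,
      |(μ (Metric.ball x ε)).toReal / ε ^ Q - c * f x| < δ) :
    ∀ δ : ℝ, 0 < δ → ∃ ε₁ : ℝ, 0 < ε₁ ∧ ∀ ε : ℝ, 0 < ε → ε ≤ ε₁ → ∀ x : X,
      |(ν (Metric.ball x ε)).toReal / ε ^ Q - c| < δ :=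
  stmt9_general ν μ f hf hfpos Q c hc hμ hconv
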